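/- arXiv:2110.05201 — 2 statements merged into one kernel-verified Lean document; each statement's English description precedes it below -/
import Mathlib

section
/- Let 0 < α < 1 and 0 ≤ a < 1/4. If c > (2(1-α) + α(4a-1)²)/(16(1-α)), then the quadratic 4s² + (4a-1)(2-α)s + (2a²-a+c)(1-α)(2-α) = 0 has no real roots; i.e., the function φ(t) = 2t² − t + c has no real fractional critical points of order α based at a. -/
open Real

theorem no_real_fractional_critical_points (α a c : ℝ)
    (hα : 0 < α) (hα1 : α < 1) (ha0 : 0 ≤ a) (ha : a < 1 / 4)
    (hc : c > (2 * (1 - α) + α * (4 * a - 1) ^ 2) / (16 * (1 - α))) :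
    ∀ s : ℝ,
      4 * s ^ 2 + (4 * a - 1) * (2 - α) * s +
        (2 * a ^ 2 - a + c) * (1 - α) * (2 - α) ≠ 0 := by
  intro s
  have h1 : (0:ℝ) < 1 - α := by linarith
  have hc' : 16 * (1 - α) * c > 2 * (1 - α) + α * (4 * a - 1) ^ 2 := by
    rw [gt_iff_lt, div_lt_iff₀ (by linarith : (0:ℝ) < 16 * (1 - α))] at hc
    linarith
  have h2 : (0:ℝ) < 2 - α := by linarith
  have key : 4 * s ^ 2 + (4 * a - 1) * (2 - α) * s +
      (2 * a ^ 2 - a + c) * (1 - α) * (2 - α) > 0 := by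
    nlinarith [sq_nonneg (8 * s + (4 * a - 1) * (2 - α)), sq_nonneg (4 * a - 1),
      mul_pos h1 h2, mul_pos h1 (mul_pos h1 h2),
      mul_nonneg (mul_nonneg h1.le h2.le) (mul_nonneg (by linarith : (0:ℝ) ≤ 1 - (4*a-1)) (by linarith : (0:ℝ) ≤ 1 + (4*a-1)))]
  linarith
end

section
/- Let φ : [0,1] → ℝ be twice continuously differentiable and attain its minimum at t* ∈ (0,1). Then for every α ∈ (0,1), the left Riemann–Liouville fractional derivative of φ at t* satisfies ᴸ₀D_t^α[φ](t*) ≤ (t*)^{-α}·φ(t*)/Γ(1-α). -/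
open Real

/-- Left Riemann–Liouville fractional derivative of order `α` with lower limit `a`. -/
noncomputable def leftRL (α a : ℝ) (φ : ℝ → ℝ) (t : ℝ) : ℝ :=
  (1 / Real.Gamma (1 - α)) *
    deriv (fun s : ℝ => ∫ τ in a..s, φ τ / (s - τ) ^ α) t


open Set MeasureTheory Filter

lemma integrable_one_sub_rpow {γ : ℝ} (hγ : γ < 1) :
    IntervalIntegrable (fun u : ℝ => (1 - u) ^ (-γ)) volume 0 1 := by
  have h := (intervalIntegral.intervalIntegrable_rpow' (a := (0:ℝ)) (b := 1) (r := -γ)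
    (by linarith)).comp_sub_left 1
  simpa using h.symm

lemma aesm_of_continuousOn_Ioo {f : ℝ → ℝ} (hf : ContinuousOn f (Ioo 0 1)) :
    AEStronglyMeasurable f (volume.restrict (Ioc (0:ℝ) 1)) := by
  rw [← Measure.restrict_congr_set Ioo_ae_eq_Ioc]
  exact hf.aestronglyMeasurable measurableSet_Ioo

lemma integrable_of_dominated {f : ℝ → ℝ} {γ c : ℝ} (hγ : γ < 1)
    (hf : ContinuousOn f (Ioo 0 1))
    (hb : ∀ u ∈ Ioo (0:ℝ) 1, |f u| ≤ c * (1 - u) ^ (-γ)) :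
    IntervalIntegrable f volume 0 1 := by
  rw [intervalIntegrable_iff_integrableOn_Ioc_of_le zero_le_one,
    integrableOn_Ioc_iff_integrableOn_Ioo]
  have hbound : IntegrableOn (fun u : ℝ => c * (1 - u) ^ (-γ)) (Ioo 0 1) volume := by
    have h := (integrable_one_sub_rpow hγ).const_mul c
    rwa [intervalIntegrable_iff_integrableOn_Ioc_of_le zero_le_one,
      integrableOn_Ioc_iff_integrableOn_Ioo] at h
  exact hbound.mono' (hf.aestronglyMeasurable measurableSet_Ioo)
    ((ae_restrict_iff' measurableSet_Ioo).2 (Eventually.of_forall fun u hu => by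
      simpa [Real.norm_eq_abs] using hb u hu))

set_option maxHeartbeats 1000000 in
theorem alRefai_bound (φ : ℝ → ℝ) (tstar : ℝ)
    (hφ : ContDiffOn ℝ 2 φ (Set.Icc 0 1))
    (ht : tstar ∈ Set.Ioo (0 : ℝ) 1)
    (hmin : IsMinOn φ (Set.Icc 0 1) tstar) :
    ∀ α ∈ Set.Ioo (0 : ℝ) 1,
      leftRL α 0 φ tstar ≤ tstar ^ (-α) * φ tstar / Real.Gamma (1 - α) := by
  obtain ⟨ht0, ht1⟩ := ht
  intro α hα
  obtain ⟨hα0, hα1⟩ := hα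
  have h1α : (0:ℝ) < 1 - α := by linarith
  have hΓ : 0 < Real.Gamma (1 - α) := Real.Gamma_pos_of_pos h1α
  set t := tstar with htdef
  -- basic facts about φ
  have hφc : ContinuousOn φ (Icc 0 1) := hφ.continuousOn
  have hφd : DifferentiableOn ℝ φ (Icc 0 1) := hφ.differentiableOn (by norm_num)
  have hdφ : ∀ x ∈ Ioo (0:ℝ) 1, HasDerivAt φ (deriv φ x) x := fun x hx =>
    (hφd.differentiableAt (Icc_mem_nhds hx.1 hx.2)).hasDerivAt
  have hdφc : ContinuousOn (deriv φ) (Ioo 0 1) :=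
    (hφ.mono Ioo_subset_Icc_self).continuousOn_deriv_of_isOpen isOpen_Ioo (by norm_num)
  obtain ⟨K, hK⟩ := isCompact_Icc.exists_bound_of_continuousOn
    (hφ.continuousOn_derivWithin (uniqueDiffOn_Icc one_pos) (by norm_num))
  have hK0 : 0 ≤ K := le_trans (norm_nonneg _) (hK 0 (by norm_num))
  have hKd : ∀ x ∈ Ioo (0:ℝ) 1, |deriv φ x| ≤ K := by
    intro x hx
    have h := derivWithin_of_mem_nhds (f := φ) (s := Icc 0 1) (Icc_mem_nhds hx.1 hx.2)
    have := hK x (Ioo_subset_Icc_self hx)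
    rw [h] at this
    simpa [Real.norm_eq_abs] using this
  have hLip : ∀ x ∈ Icc (0:ℝ) 1, ∀ y ∈ Icc (0:ℝ) 1, |φ y - φ x| ≤ K * |y - x| := by
    intro x hx y hy
    have := (convex_Icc (0:ℝ) 1).norm_image_sub_le_of_norm_derivWithin_le hφd hK hx hy
    simpa [Real.norm_eq_abs] using this
  obtain ⟨M, hM⟩ := isCompact_Icc.exists_bound_of_continuousOn hφc
  have hM' : ∀ x ∈ Icc (0:ℝ) 1, |φ x| ≤ M := fun x hx => by
    simpa [Real.norm_eq_abs] using hM x hx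
  -- membership facts
  have hmem : ∀ u ∈ Icc (0:ℝ) 1, t * u ∈ Icc (0:ℝ) 1 := by
    intro u hu
    exact ⟨mul_nonneg ht0.le hu.1, by nlinarith [hu.1, hu.2]⟩
  have hmemo : ∀ u ∈ Ioo (0:ℝ) 1, t * u ∈ Ioo (0:ℝ) 1 := by
    intro u hu
    exact ⟨mul_pos ht0 hu.1, by nlinarith [hu.1, hu.2]⟩
  have hψ0 : ∀ u ∈ Icc (0:ℝ) 1, 0 ≤ φ (t*u) - φ t := fun u hu =>
    sub_nonneg.2 (hmin (hmem u hu))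
  have hψle : ∀ u ∈ Icc (0:ℝ) 1, |φ (t*u) - φ t| ≤ K * t * (1 - u) := by
    intro u hu
    have h := hLip t ⟨ht0.le, ht1.le⟩ (t*u) (hmem u hu)
    have habs : |t*u - t| = t * (1 - u) := by
      rw [abs_of_nonpos (by nlinarith [hu.2])]; ring
    rw [habs] at h
    linarith [h]
  -- the weight and its properties
  have hw0 : ∀ u : ℝ, u ≤ 1 → 0 ≤ (1-u) ^ (-α) := fun u h =>
    Real.rpow_nonneg (by linarith) _
  have hwle : ∀ u ∈ Icc (0:ℝ) 1, (1-u) * (1-u) ^ (-α) = (1-u) ^ (1-α) := by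
    intro u hu
    rcases eq_or_lt_of_le hu.2 with h | h
    · subst h; simp [Real.zero_rpow (by linarith : 1-α ≠ 0)]
    · rw [show (1:ℝ)-α = 1 + -α by ring, Real.rpow_add (by linarith), Real.rpow_one]
  have hwc : ContinuousOn (fun u : ℝ => (1-u) ^ (-α)) (Ioo 0 1) := by
    intro u hu
    exact ((Real.continuousAt_rpow_const (1-u) (-α)
      (Or.inl (by linarith [hu.2] : (1:ℝ)-u ≠ 0))).comp
      ((continuous_const.sub continuous_id).continuousAt)).continuousWithinAt
  have hwInt : IntervalIntegrable (fun u : ℝ => (1-u) ^ (-α)) volume 0 1 :=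
    integrable_one_sub_rpow hα1
  have hIw : ∫ u in (0:ℝ)..1, (1-u) ^ (-α) = 1/(1-α) := by
    have h := intervalIntegral.integral_comp_sub_left (a := (0:ℝ)) (b := 1)
      (fun x : ℝ => x ^ (-α)) 1
    simp only [sub_self, sub_zero] at h
    rw [h, integral_rpow (Or.inl (by linarith : (-1:ℝ) < -α)),
      Real.one_rpow, Real.zero_rpow (by intro hc; linarith [hc] : -α + 1 ≠ 0)]
    ring_nf
  -- continuity of auxiliary rpow
  have hzc : ContinuousOn (fun u : ℝ => (1-u) ^ (-α-1)) (Ioo 0 1) := by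
    intro u hu
    exact ((Real.continuousAt_rpow_const (1-u) (-α-1)
      (Or.inl (by linarith [hu.2] : (1:ℝ)-u ≠ 0))).comp
      ((continuous_const.sub continuous_id).continuousAt)).continuousWithinAt
  have hz0 : ∀ u : ℝ, u ≤ 1 → 0 ≤ (1-u) ^ (-α-1) := fun u h =>
    Real.rpow_nonneg (by linarith) _
  have hzw : ∀ u ∈ Ioo (0:ℝ) 1, (1-u) * (1-u) ^ (-α-1) = (1-u) ^ (-α) := by
    intro u hu
    rw [show -α = (-α-1) + 1 by ring, Real.rpow_add (by linarith [hu.2]), Real.rpow_one]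
    ring_nf
  have hφtc : ContinuousOn (fun u : ℝ => φ (t*u)) (Icc 0 1) := by
    apply hφc.comp ((continuous_const.mul continuous_id).continuousOn) hmem
  -- integrability of the integrands
  have IA : IntervalIntegrable (fun u : ℝ => φ (t*u) * (1-u)^(-α)) volume 0 1 := by
    apply integrable_of_dominated hα1 ((hφtc.mono Ioo_subset_Icc_self).mul hwc)
    intro u hu
    simp only [Pi.mul_apply]
    rw [abs_mul, abs_of_nonneg (hw0 u hu.2.le)]
    exact mul_le_mul_of_nonneg_right (hM' _ (hmem u (Ioo_subset_Icc_self hu))) (hw0 u hu.2.le)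
  have Iψw : IntervalIntegrable (fun u : ℝ => (φ (t*u) - φ t) * (1-u)^(-α)) volume 0 1 := by
    apply integrable_of_dominated (c := K*t) hα1
      (((hφtc.mono Ioo_subset_Icc_self).sub continuousOn_const).mul hwc)
    intro u hu
    simp only [Pi.mul_apply, Pi.sub_apply]
    rw [abs_mul, abs_of_nonneg (hw0 u hu.2.le)]
    apply mul_le_mul_of_nonneg_right _ (hw0 u hu.2.le)
    have := hψle u (Ioo_subset_Icc_self hu)
    nlinarith [hu.1, hu.2, mul_nonneg hK0 ht0.le]
  have Ih1 : IntervalIntegrable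
      (fun u : ℝ => t * (deriv φ (t*u) * (u * (1-u)^(-α)))) volume 0 1 := by
    apply integrable_of_dominated (c := K) hα1
    · exact continuousOn_const.mul (((hdφc.comp
        ((continuous_const.mul continuous_id).continuousOn) hmemo)).mul
        (continuousOn_id.mul hwc))
    · intro u hu
      have hd := hKd _ (hmemo u hu)
      have hwu := hw0 u hu.2.le
      have habs : |t * (deriv φ (t*u) * (u * (1-u)^(-α)))|
          = t * (|deriv φ (t*u)| * (u * (1-u)^(-α))) := by
        rw [abs_mul, abs_mul, abs_mul, abs_of_nonneg ht0.le, abs_of_nonneg hu.1.le,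
          abs_of_nonneg hwu]
      rw [habs]
      have h1 : u * (1-u)^(-α) ≤ (1-u)^(-α) := by
        nlinarith [mul_nonneg hwu (by linarith [hu.2] : (0:ℝ) ≤ 1-u)]
      have h2 : |deriv φ (t*u)| * (u * (1-u)^(-α)) ≤ K * (1-u)^(-α) :=
        mul_le_mul hd h1 (mul_nonneg hu.1.le hwu) hK0
      calc t * (|deriv φ (t*u)| * (u * (1-u)^(-α)))
          ≤ 1 * (|deriv φ (t*u)| * (u * (1-u)^(-α))) :=
            mul_le_mul_of_nonneg_right ht1.le
              (mul_nonneg (abs_nonneg _) (mul_nonneg hu.1.le hwu))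
        _ ≤ K * (1-u)^(-α) := by rw [one_mul]; exact h2
  have Ih23 : IntervalIntegrable (fun u : ℝ =>
      (φ (t*u) - φ t) * ((1-u)^(-α) + u * (α * (1-u)^(-α-1)))) volume 0 1 := by
    apply integrable_of_dominated (c := K*t*(1+α)) hα1
    · exact ((hφtc.mono Ioo_subset_Icc_self).sub continuousOn_const).mul
        (hwc.add (continuousOn_id.mul (continuousOn_const.mul hzc)))
    · intro u hu
      have hψu := hψle u (Ioo_subset_Icc_self hu)
      have hψp := hψ0 u (Ioo_subset_Icc_self hu)
      have hwu := hw0 u hu.2.le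
      have hzu := hz0 u hu.2.le
      have hzwu := hzw u hu
      have hin : (0:ℝ) ≤ (1-u)^(-α) + u * (α * (1-u)^(-α-1)) :=
        add_nonneg hwu (mul_nonneg hu.1.le (mul_nonneg hα0.le hzu))
      rw [abs_mul, abs_of_nonneg hin, abs_of_nonneg hψp]
      have h2 : (φ (t*u) - φ t) * ((1-u)^(-α) + u * (α * (1-u)^(-α-1)))
          ≤ (K*t*(1-u)) * ((1-u)^(-α) + u * (α * (1-u)^(-α-1))) :=
        mul_le_mul_of_nonneg_right (le_trans (le_abs_self _) hψu) hin
      have h3 : (K*t*(1-u)) * ((1-u)^(-α) + u * (α * (1-u)^(-α-1)))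
          = K*t*((1-u)*(1-u)^(-α)) + K*t*u*α*((1-u)*(1-u)^(-α-1)) := by ring
      rw [hzwu] at h3
      have h4 : (0:ℝ) ≤ α + u*(1-α) := by nlinarith [hu.1]
      have h5 := mul_nonneg (mul_nonneg (mul_nonneg hK0 ht0.le) hwu) h4
      nlinarith [h2, h3, h5, mul_nonneg hwu (by linarith [hu.2] : (0:ℝ) ≤ 1-u),
        mul_nonneg hK0 ht0.le]
  -- differentiation under the integral sign
  have hg : HasDerivAt (fun s : ℝ => ∫ u in (0:ℝ)..1, φ (s*u) * (1-u)^(-α))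
      (∫ u in (0:ℝ)..1, deriv φ (t*u) * u * (1-u)^(-α)) t := by
    set ε : ℝ := min (t/2) ((1-t)/2) with hε
    have hε0 : 0 < ε := lt_min (by linarith) (by linarith)
    have hball : ∀ x ∈ Metric.ball t ε, x ∈ Ioo (0:ℝ) 1 := by
      intro x hx
      rw [Metric.mem_ball, Real.dist_eq] at hx
      have h1 := abs_lt.1 hx
      have h2 : ε ≤ t/2 := min_le_left _ _
      have h3 : ε ≤ (1-t)/2 := min_le_right _ _
      exact ⟨by linarith [h1.1], by linarith [h1.2]⟩
    refine (intervalIntegral.hasDerivAt_integral_of_dominated_loc_of_deriv_le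
      (F := fun x u => φ (x*u) * (1-u)^(-α))
      (F' := fun x u => deriv φ (x*u) * u * (1-u)^(-α))
      (bound := fun u => K * (1-u)^(-α))
      (Metric.ball_mem_nhds t hε0) ?_ ?_ ?_ ?_ ?_ ?_).2
    · filter_upwards [Ioo_mem_nhds ht0 ht1] with x hx
      rw [uIoc_of_le (zero_le_one (α := ℝ))]
      apply aesm_of_continuousOn_Ioo
      refine ContinuousOn.mul ?_ hwc
      apply hφc.comp ((continuous_const.mul continuous_id).continuousOn)
      intro u hu
      simp only [Pi.mul_apply, id_eq]
      exact ⟨mul_nonneg hx.1.le hu.1.le,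
        by nlinarith [hu.1, hu.2, hx.1, hx.2]⟩
    · exact IA
    · rw [uIoc_of_le (zero_le_one (α := ℝ))]
      apply aesm_of_continuousOn_Ioo
      exact ((hdφc.comp ((continuous_const.mul continuous_id).continuousOn) hmemo).mul
        continuousOn_id).mul hwc
    · apply Eventually.of_forall
      intro u hu x hx
      rw [uIoc_of_le (zero_le_one (α := ℝ))] at hu
      have hx' := hball x hx
      have hxu : x*u ∈ Ioo (0:ℝ) 1 :=
        ⟨mul_pos hx'.1 hu.1, by nlinarith [hu.1, hu.2, hx'.1, hx'.2]⟩
      have hwu : 0 ≤ (1-u)^(-α) := hw0 u hu.2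
      have hd := hKd _ hxu
      rw [Real.norm_eq_abs, abs_mul, abs_mul, abs_of_nonneg hwu]
      have h1 : |deriv φ (x*u)| * |u| ≤ K * 1 :=
        mul_le_mul hd (abs_le.2 ⟨by linarith [hu.1], hu.2⟩) (abs_nonneg _) hK0
      have := mul_le_mul_of_nonneg_right h1 hwu
      simpa using this
    · exact hwInt.const_mul K
    · apply Eventually.of_forall
      intro u hu x hx
      rw [uIoc_of_le (zero_le_one (α := ℝ))] at hu
      have hx' := hball x hx
      have hxu : x*u ∈ Ioo (0:ℝ) 1 :=
        ⟨mul_pos hx'.1 hu.1, by nlinarith [hu.1, hu.2, hx'.1, hx'.2]⟩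
      have hcomp : HasDerivAt (fun x : ℝ => φ (x*u)) (deriv φ (x*u) * u) x :=
        (hdφ _ hxu).comp x (hasDerivAt_mul_const u)
      exact hcomp.mul_const _
  -- change of variables
  have hsub : ∀ s ∈ Ioo (0:ℝ) 1, (∫ τ in (0:ℝ)..s, φ τ / (s - τ) ^ α)
      = s ^ (1-α) * ∫ u in (0:ℝ)..1, φ (s*u) * (1-u)^(-α) := by
    intro s hs
    have hs0 := hs.1
    have hcomp := intervalIntegral.integral_comp_mul_right
      (a := (0:ℝ)) (b := 1) (fun τ => φ τ / (s - τ) ^ α) (ne_of_gt hs0)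
    rw [zero_mul, one_mul] at hcomp
    have hcongr : (∫ u in (0:ℝ)..1, φ (u*s) / (s - u*s) ^ α)
        = s^(-α) * ∫ u in (0:ℝ)..1, φ (s*u) * (1-u)^(-α) := by
      rw [← intervalIntegral.integral_const_mul]
      apply intervalIntegral.integral_congr
      intro u hu
      rw [uIcc_of_le (zero_le_one (α := ℝ))] at hu
      have h1u : (0:ℝ) ≤ 1 - u := by linarith [hu.2]
      have hss : s - u*s = s*(1-u) := by ring
      show φ (u*s) / (s - u*s) ^ α = s^(-α) * (φ (s*u) * (1-u)^(-α))
      rw [hss, Real.mul_rpow hs0.le h1u, mul_comm u s,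
        Real.rpow_neg hs0.le, Real.rpow_neg h1u, div_eq_mul_inv, mul_inv]
      ring
    have hF : (∫ τ in (0:ℝ)..s, φ τ / (s - τ) ^ α)
        = s • ∫ u in (0:ℝ)..1, φ (u*s) / (s - u*s) ^ α := by
      rw [hcomp, smul_smul, mul_inv_cancel₀ (ne_of_gt hs0), one_smul]
    rw [hF, hcongr, smul_eq_mul,
      show s^(1-α) = s * s^(-α) by
        rw [show (1:ℝ)-α = 1 + -α by ring, Real.rpow_add hs0, Real.rpow_one]]
    ring
  -- the derivative of the RL integral at t
  have hrp : HasDerivAt (fun s : ℝ => s^(1-α)) ((1-α) * t^(-α)) t := by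
    have h := Real.hasDerivAt_rpow_const (x := t) (p := 1-α) (Or.inl (ne_of_gt ht0))
    rwa [show (1:ℝ)-α-1 = -α by ring] at h
  have hG : HasDerivAt (fun s : ℝ => s^(1-α) * ∫ u in (0:ℝ)..1, φ (s*u) * (1-u)^(-α))
      ((1-α) * t^(-α) * (∫ u in (0:ℝ)..1, φ (t*u) * (1-u)^(-α))
        + t^(1-α) * ∫ u in (0:ℝ)..1, deriv φ (t*u) * u * (1-u)^(-α)) t :=
    hrp.mul hg
  have hev : (fun s : ℝ => ∫ τ in (0:ℝ)..s, φ τ / (s - τ) ^ α)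
      =ᶠ[nhds t] (fun s : ℝ => s^(1-α) * ∫ u in (0:ℝ)..1, φ (s*u) * (1-u)^(-α)) := by
    filter_upwards [Ioo_mem_nhds ht0 ht1] with s hs
    exact hsub s hs
  have hderiv : deriv (fun s : ℝ => ∫ τ in (0:ℝ)..s, φ τ / (s - τ) ^ α) t
      = (1-α) * t^(-α) * (∫ u in (0:ℝ)..1, φ (t*u) * (1-u)^(-α))
        + t^(1-α) * ∫ u in (0:ℝ)..1, deriv φ (t*u) * u * (1-u)^(-α) := by
    rw [hev.deriv_eq]; exact hG.deriv
  -- integration by parts via FTC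
  have hHc : ContinuousOn (fun u : ℝ => (φ (t*u) - φ t) * (u * (1-u)^(-α))) (Icc 0 1) := by
    intro u hu
    rcases eq_or_lt_of_le hu.2 with h | h
    · -- u = 1 : squeeze
      subst h
      have hH1 : ((fun u : ℝ => (φ (t*u) - φ t) * (u * (1-u)^(-α))) 1) = 0 := by
        simp
      unfold ContinuousWithinAt
      rw [hH1]
      apply squeeze_zero_norm' (a := fun v => K * t * (1-v)^(1-α))
      · apply eventually_nhdsWithin_of_forall
        intro v hv
        rw [Real.norm_eq_abs, abs_mul, abs_mul, abs_of_nonneg (hw0 v hv.2)]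
        have h1 := hψle v hv
        have h2 : |v| ≤ 1 := abs_le.2 ⟨by linarith [hv.1], hv.2⟩
        have h3 := hwle v hv
        have hwv := hw0 v hv.2
        have h4 : |φ (t*v) - φ t| * (|v| * (1-v)^(-α)) ≤ (K*t*(1-v)) * (1 * (1-v)^(-α)) := by
          apply mul_le_mul h1 (mul_le_mul_of_nonneg_right h2 hwv)
            (mul_nonneg (abs_nonneg _) hwv)
          nlinarith [mul_nonneg hK0 ht0.le, hv.1, hv.2]
        calc |φ (t*v) - φ t| * (|v| * (1-v)^(-α)) ≤ (K*t*(1-v)) * (1 * (1-v)^(-α)) := h4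
          _ = K * t * ((1-v) * (1-v)^(-α)) := by ring
          _ = K * t * (1-v)^(1-α) := by rw [h3]
      · have hc : ContinuousAt (fun v : ℝ => K * t * (1-v)^(1-α)) 1 := by
          apply ContinuousAt.mul continuousAt_const
          exact (Real.continuousAt_rpow_const (1-1) (1-α) (Or.inr (by linarith))).comp
            ((continuous_const.sub continuous_id).continuousAt)
        have := hc.continuousWithinAt (s := Icc (0:ℝ) 1)
        unfold ContinuousWithinAt at this
        simpa [Real.zero_rpow (by linarith : 1-α ≠ 0)] using this
    · -- u < 1
      apply ContinuousWithinAt.mul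
      · exact ((hφtc u hu).sub continuousWithinAt_const)
      · apply ContinuousWithinAt.mul continuousWithinAt_id
        exact ((Real.continuousAt_rpow_const (1-u) (-α)
          (Or.inl (by linarith : (1:ℝ)-u ≠ 0))).comp
          ((continuous_const.sub continuous_id).continuousAt)).continuousWithinAt
  have hHd : ∀ u ∈ Ioo (0:ℝ) 1, HasDerivAt (fun u : ℝ => (φ (t*u) - φ t) * (u * (1-u)^(-α)))
      (t * (deriv φ (t*u) * (u * (1-u)^(-α)))
        + (φ (t*u) - φ t) * ((1-u)^(-α) + u * (α * (1-u)^(-α-1)))) u := by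
    intro u hu
    have htu := hmemo u hu
    have hψd := ((hdφ _ htu).comp u ((hasDerivAt_id u).const_mul t)).sub_const (φ t)
    have hwd : HasDerivAt (fun u : ℝ => (1-u)^(-α)) (-α * (1-u)^(-α-1) * -1) u := by
      exact (Real.hasDerivAt_rpow_const (x := 1-u) (p := -α)
        (Or.inl (by linarith [hu.2] : (1:ℝ)-u ≠ 0))).comp u
        ((hasDerivAt_id u).const_sub 1)
    have hχ := (hasDerivAt_id u).mul hwd
    have := hψd.mul hχ
    refine this.congr_deriv ?_
    simp only [Pi.mul_apply, Function.comp_apply, id_eq]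
    ring
  have hFTC : (∫ u in (0:ℝ)..1, (t * (deriv φ (t*u) * (u * (1-u)^(-α)))
        + (φ (t*u) - φ t) * ((1-u)^(-α) + u * (α * (1-u)^(-α-1)))))
      = (fun u : ℝ => (φ (t*u) - φ t) * (u * (1-u)^(-α))) 1
        - (fun u : ℝ => (φ (t*u) - φ t) * (u * (1-u)^(-α))) 0 :=
    intervalIntegral.integral_eq_sub_of_hasDeriv_right_of_le zero_le_one hHc
      (fun u hu => (hHd u hu).hasDerivWithinAt) (Ih1.add Ih23)
  have hC : (∫ u in (0:ℝ)..1, t * (deriv φ (t*u) * (u * (1-u)^(-α))))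
      + (∫ u in (0:ℝ)..1, (φ (t*u) - φ t) * ((1-u)^(-α) + u * (α * (1-u)^(-α-1)))) = 0 := by
    rw [← intervalIntegral.integral_add Ih1 Ih23, hFTC]
    simp
  -- splitting ∫ ψ w
  have hsplit : (∫ u in (0:ℝ)..1, (φ (t*u) - φ t) * (1-u)^(-α))
      = (∫ u in (0:ℝ)..1, φ (t*u) * (1-u)^(-α)) - φ t * (1/(1-α)) := by
    have heq : ∀ u, (φ (t*u) - φ t) * (1-u)^(-α)
        = φ (t*u) * (1-u)^(-α) - φ t * ((1-u)^(-α)) := fun u => by ring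
    rw [intervalIntegral.integral_congr (g := fun u =>
        φ (t*u) * (1-u)^(-α) - φ t * ((1-u)^(-α))) (fun u _ => heq u),
      intervalIntegral.integral_sub IA (hwInt.const_mul (φ t)),
      intervalIntegral.integral_const_mul, hIw]
  have hψwpos : 0 ≤ ∫ u in (0:ℝ)..1, (φ (t*u) - φ t) * (1-u)^(-α) :=
    intervalIntegral.integral_nonneg zero_le_one (fun u hu =>
      mul_nonneg (hψ0 u hu) (hw0 u hu.2))
  have hmono : (∫ u in (0:ℝ)..1, (φ (t*u) - φ t) * (1-u)^(-α))
      ≤ ∫ u in (0:ℝ)..1, (φ (t*u) - φ t) * ((1-u)^(-α) + u * (α * (1-u)^(-α-1))) := by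
    apply intervalIntegral.integral_mono_on zero_le_one Iψw Ih23
    intro u hu
    nlinarith [mul_nonneg (mul_nonneg (hψ0 u hu) hu.1) (mul_nonneg hα0.le (hz0 u hu.2))]
  -- pulling the constant t into the integral
  have htI : (∫ u in (0:ℝ)..1, t * (deriv φ (t*u) * (u * (1-u)^(-α))))
      = t * ∫ u in (0:ℝ)..1, deriv φ (t*u) * u * (1-u)^(-α) := by
    rw [← intervalIntegral.integral_const_mul]
    apply intervalIntegral.integral_congr
    intro u _
    show t * (deriv φ (t*u) * (u * (1-u)^(-α))) = t * (deriv φ (t*u) * u * (1-u)^(-α))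
    ring
  -- the main inequality
  have main : (1-α) * (∫ u in (0:ℝ)..1, φ (t*u) * (1-u)^(-α))
      + t * (∫ u in (0:ℝ)..1, deriv φ (t*u) * u * (1-u)^(-α)) ≤ φ t := by
    rw [← htI]
    have hA : (∫ u in (0:ℝ)..1, φ (t*u) * (1-u)^(-α))
        = (∫ u in (0:ℝ)..1, (φ (t*u) - φ t) * (1-u)^(-α)) + φ t * (1/(1-α)) := by
      rw [hsplit]; ring
    rw [hA]
    have expand : (1-α) * ((∫ u in (0:ℝ)..1, (φ (t*u) - φ t) * (1-u)^(-α))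
        + φ t * (1/(1-α)))
        = (1-α) * (∫ u in (0:ℝ)..1, (φ (t*u) - φ t) * (1-u)^(-α)) + φ t := by
      field_simp
    rw [expand]
    linarith [hmono, hψwpos, hC, mul_nonneg hα0.le hψwpos]
  have hkey : (1-α) * t^(-α) * (∫ u in (0:ℝ)..1, φ (t*u) * (1-u)^(-α))
      + t^(1-α) * (∫ u in (0:ℝ)..1, deriv φ (t*u) * u * (1-u)^(-α))
      ≤ t^(-α) * φ t := by
    have htpow : t^(1-α) = t^(-α) * t := by
      rw [show (1:ℝ)-α = -α + 1 by ring, Real.rpow_add ht0, Real.rpow_one]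
    have htp : (0:ℝ) ≤ t^(-α) := Real.rpow_nonneg ht0.le _
    rw [htpow]
    calc (1-α) * t^(-α) * (∫ u in (0:ℝ)..1, φ (t*u) * (1-u)^(-α))
        + t^(-α) * t * (∫ u in (0:ℝ)..1, deriv φ (t*u) * u * (1-u)^(-α))
        = t^(-α) * ((1-α) * (∫ u in (0:ℝ)..1, φ (t*u) * (1-u)^(-α))
          + t * (∫ u in (0:ℝ)..1, deriv φ (t*u) * u * (1-u)^(-α))) := by ring
      _ ≤ t^(-α) * φ t := mul_le_mul_of_nonneg_left main htp
  -- conclusion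
  show (1 / Real.Gamma (1 - α)) *
      deriv (fun s : ℝ => ∫ τ in (0:ℝ)..s, φ τ / (s - τ) ^ α) t
      ≤ t ^ (-α) * φ t / Real.Gamma (1 - α)
  rw [hderiv]
  have hΓ' : (0:ℝ) ≤ 1 / Real.Gamma (1-α) := by positivity
  calc (1 / Real.Gamma (1 - α)) *
      ((1-α) * t^(-α) * (∫ u in (0:ℝ)..1, φ (t*u) * (1-u)^(-α))
        + t^(1-α) * ∫ u in (0:ℝ)..1, deriv φ (t*u) * u * (1-u)^(-α))
      ≤ (1 / Real.Gamma (1 - α)) * (t^(-α) * φ t) :=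
        mul_le_mul_of_nonneg_left hkey hΓ'
    _ = t ^ (-α) * φ t / Real.Gamma (1 - α) := by
        rw [div_eq_mul_inv]; ring
end
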